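/- arXiv:1808.05204 — 8 statements merged into one kernel-verified Lean document; each statement's English description precedes it below -/
import Mathlib

section
/- Let (α, r) be a well-founded extensional graph and let x, y : α. If there exists a relation isomorphism between the relation induced by r on the subtype {z : α // Relation.ReflTransGen r z x} and the relation induced by r on the subtype {z : α // Relation.ReflTransGen r z y}, then x = y. -/
/-- Auxiliary rigidity lemma: any relation isomorphism between slices of a
well-founded extensional graph is the identity on underlying values. -/
theorem wf_ext_slice_iso_fix {α : Type*} {r : α → α → Prop}
    (hwf : WellFounded r)
    (hext : ∀ x y : α, (∀ z, r z x ↔ r z y) → x = y)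
    (x y : α)
    (f : (fun a b : {z : α // Relation.ReflTransGen r z x} => r a.1 b.1) ≃r
         (fun a b : {z : α // Relation.ReflTransGen r z y} => r a.1 b.1)) :
    ∀ a (ha : Relation.ReflTransGen r a x), (f ⟨a, ha⟩).1 = a := by
  intro a
  induction a using hwf.induction with
  | _ a IH =>
    intro ha
    apply hext
    intro w
    constructor
    · intro hw
      have hwY : Relation.ReflTransGen r w y :=
        Relation.ReflTransGen.head hw (f ⟨a, ha⟩).2
      obtain ⟨b, hb⟩ := f.surjective ⟨w, hwY⟩
      have hrel : r b.1 a := by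
        have : r (f b).1 (f ⟨a, ha⟩).1 := by rw [hb]; exact hw
        exact f.map_rel_iff.1 this
      have hb1 : (f ⟨b.1, b.2⟩).1 = b.1 := IH b.1 hrel b.2
      have hbw : b.1 = w := by
        have := congrArg Subtype.val hb
        simpa [hb1] using this.symm.trans hb1 |>.symm ▸ rfl
      exact hbw ▸ hrel
    · intro hw
      have hwX : Relation.ReflTransGen r w x := Relation.ReflTransGen.head hw ha
      have : r (f ⟨w, hwX⟩).1 (f ⟨a, ha⟩).1 := f.map_rel_iff.2 hw
      rwa [IH w hw hwX] at this

/-- In a well-founded extensional graph, if the sub-graphs below `x` and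
below `y` (nodes reachable from `x`, resp. `y`, via `Relation.ReflTransGen`) are
isomorphic as relations, then `x = y`. -/
theorem wf_ext_slice_iso_eq {α : Type*} {r : α → α → Prop}
    (hwf : WellFounded r)
    (hext : ∀ x y : α, (∀ z, r z x ↔ r z y) → x = y)
    (x y : α)
    (h : Nonempty
      ((fun a b : {z : α // Relation.ReflTransGen r z x} => r a.1 b.1) ≃r
       (fun a b : {z : α // Relation.ReflTransGen r z y} => r a.1 b.1))) :
    x = y := by
  obtain ⟨f⟩ := h
  have hx : Relation.ReflTransGen r x y := by
    have := (f ⟨x, Relation.ReflTransGen.refl⟩).2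
    rwa [wf_ext_slice_iso_fix hwf hext x y f x Relation.ReflTransGen.refl] at this
  have hy : Relation.ReflTransGen r y x := by
    have := (f.symm ⟨y, Relation.ReflTransGen.refl⟩).2
    rwa [wf_ext_slice_iso_fix hwf hext y x f.symm y Relation.ReflTransGen.refl] at this
  rcases (Relation.reflTransGen_iff_eq_or_transGen).1 hx with h1 | h1
  · exact h1.symm
  rcases (Relation.reflTransGen_iff_eq_or_transGen).1 hy with h2 | h2
  · exact h2
  exact absurd (h1.trans h2) (hwf.transGen.isIrrefl.irrefl x)
end

section
/- Let R be a bi-entire bisimulation from a graph (α, r) to a graph (β, s). Then r is well-founded if and only if s is well-founded. -/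
/-- A bisimulation from a graph `(α, r)` to a graph `(β, s)`. -/
def IsBisimulation {α β : Type*} (r : α → α → Prop) (s : β → β → Prop)
    (R : α → β → Prop) : Prop :=
  ∀ x y, R x y →
    (∀ x', r x' x → ∃ y', s y' y ∧ R x' y') ∧
    (∀ y', s y' y → ∃ x', r x' x ∧ R x' y')

/-- A bi-entire relation. -/
def BiEntire {α β : Type*} (R : α → β → Prop) : Prop :=
  (∀ x, ∃ y, R x y) ∧ (∀ y, ∃ x, R x y)

lemma acc_of_bisim {α β : Type*} {r : α → α → Prop} {s : β → β → Prop} {R : α → β → Prop}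
    (hR : IsBisimulation r s R) {x : α} (hx : Acc r x) : ∀ y, R x y → Acc s y := by
  induction hx with
  | intro x _ ih =>
    intro y hxy
    constructor
    intro y' hy'
    obtain ⟨x', hx', hR'⟩ := (hR x y hxy).2 y' hy'
    exact ih x' hx' y' hR'

/-- If `R` is a bi-entire bisimulation from `(α, r)` to `(β, s)`, then `r`
is well-founded iff `s` is well-founded. -/
theorem biEntire_bisimulation_wellFounded_iff {α β : Type*}
    {r : α → α → Prop} {s : β → β → Prop} {R : α → β → Prop}
    (hR : IsBisimulation r s R) (hbe : BiEntire R) :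
    WellFounded r ↔ WellFounded s := by
  have hR' : IsBisimulation s r (fun y x => R x y) := by
    intro y x hxy
    exact ⟨(hR x y hxy).2, (hR x y hxy).1⟩
  constructor
  · intro h
    constructor
    intro y
    obtain ⟨x, hx⟩ := hbe.2 y
    exact acc_of_bisim hR (h.apply x) y hx
  · intro h
    constructor
    intro x
    obtain ⟨y, hy⟩ := hbe.1 x
    exact acc_of_bisim hR' (h.apply y) x hy
end

section
/- Let (α, r) and (β, s) be well-founded extensional graphs and let R be a bi-entire bisimulation from (α, r) to (β, s). Then R is the graph of an isomorphism: there exists a relation isomorphism e : r ≃r s such that for all x : α and y : β, R x y holds if and only if e x = y. -/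
/-- A bi-entire bisimulation between well-founded extensional graphs is
the graph of a relation isomorphism. -/
theorem biEntire_bisimulation_iso {α β : Type*}
    {r : α → α → Prop} {s : β → β → Prop} {R : α → β → Prop}
    (hwfr : WellFounded r)
    (hextr : ∀ x y : α, (∀ z, r z x ↔ r z y) → x = y)
    (hwfs : WellFounded s)
    (hexts : ∀ x y : β, (∀ z, s z x ↔ s z y) → x = y)
    (hR : IsBisimulation r s R) (hbe : BiEntire R) :
    ∃ e : r ≃r s, ∀ (x : α) (y : β), R x y ↔ e x = y := by
  -- functionality
  have funA : ∀ x : α, ∀ y y' : β, R x y → R x y' → y = y' := by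
    intro x
    induction x using hwfr.induction with
    | _ x IH =>
      intro y y' hy hy'
      apply hexts
      intro z
      constructor
      · intro hz
        obtain ⟨x', hx', hRx'⟩ := (hR x y hy).2 z hz
        obtain ⟨z', hz', hRz'⟩ := (hR x y' hy').1 x' hx'
        rwa [IH x' hx' z z' hRx' hRz']
      · intro hz
        obtain ⟨x', hx', hRx'⟩ := (hR x y' hy').2 z hz
        obtain ⟨z', hz', hRz'⟩ := (hR x y hy).1 x' hx'
        rwa [IH x' hx' z' z hRz' hRx'] at hz'
  have funB : ∀ y : β, ∀ x x' : α, R x y → R x' y → x = x' := by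
    intro y
    induction y using hwfs.induction with
    | _ y IH =>
      intro x x' hx hx'
      apply hextr
      intro z
      constructor
      · intro hz
        obtain ⟨y', hy', hRy'⟩ := (hR x y hx).1 z hz
        obtain ⟨z', hz', hRz'⟩ := (hR x' y hx').2 y' hy'
        rwa [IH y' hy' z z' hRy' hRz']
      · intro hz
        obtain ⟨y', hy', hRy'⟩ := (hR x' y hx').1 z hz
        obtain ⟨z', hz', hRz'⟩ := (hR x y hx).2 y' hy'
        rwa [IH y' hy' z z' hRy' hRz']
  choose f hf using hbe.1
  choose g hg using hbe.2
  have hfg : ∀ y, f (g y) = y := fun y => funA (g y) _ _ (hf (g y)) (hg y)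
  have hgf : ∀ x, g (f x) = x := fun x => funB (f x) _ _ (hg (f x)) (hf x)
  have hiff : ∀ x y, R x y ↔ f x = y := by
    intro x y
    constructor
    · intro h; exact funA x _ _ (hf x) h
    · rintro rfl; exact hf x
  refine ⟨⟨⟨f, g, hgf, hfg⟩, ?_⟩, fun x y => hiff x y⟩
  intro a b
  simp only [Equiv.coe_fn_mk]
  constructor
  · intro hab
    obtain ⟨x', hx', hRx'⟩ := (hR b (f b) (hf b)).2 (f a) hab
    rwa [funB (f a) x' a hRx' (hf a)] at hx'
  · intro hab
    obtain ⟨y', hy', hRy'⟩ := (hR b (f b) (hf b)).1 a hab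
    rwa [(hiff a y').1 hRy']
end

section
/- Let (α, r) be a well-founded graph. Then r is extensional if and only if every bisimulation R from (α, r) to itself is contained in the identity, i.e. for every such R and all x y : α, R x y implies x = y. -/
/-- A well-founded graph is extensional iff every bisimulation from it to
itself is contained in the identity. -/
theorem wellFounded_extensional_iff_bisimulation_le_id {α : Type*}
    {r : α → α → Prop} (hwf : WellFounded r) :
    (∀ x y : α, (∀ z, r z x ↔ r z y) → x = y) ↔
      ∀ R : α → α → Prop, IsBisimulation r r R → ∀ x y, R x y → x = y := by
  constructor
  · intro hext R hR x
    induction x using hwf.induction with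
    | _ x ih =>
      intro y hxy
      obtain ⟨h1, h2⟩ := hR x y hxy
      apply hext
      intro z
      constructor
      · intro hz
        obtain ⟨y', hy', hR'⟩ := h1 z hz
        rwa [ih z hz y' hR']
      · intro hz
        obtain ⟨x', hx', hR'⟩ := h2 z hz
        rwa [← ih x' hx' z hR']
  · intro h x y hxy
    refine h (fun a b => ∀ z, r z a ↔ r z b) ?_ x y hxy
    intro a b hab
    exact ⟨fun x' hx' => ⟨x', (hab x').mp hx', fun _ => Iff.rfl⟩,
           fun y' hy' => ⟨y', (hab y').mpr hy', fun _ => Iff.rfl⟩⟩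
end

section
/- For every well-founded graph (α, r) with α : Type u, there exist a type β : Type u, a binary relation s : β → β → Prop that is well-founded and extensional, and a surjective simulation f : α → β from (α, r) to (β, s) (the extensional quotient of (α, r)). -/
universe u

/-- A simulation from a graph `(α, r)` to a graph `(β, s)`. -/
def IsSimulation {α β : Type*} (r : α → α → Prop) (s : β → β → Prop) (f : α → β) : Prop :=
  (∀ x' x, r x' x → s (f x') (f x)) ∧
  (∀ x y, s y (f x) → ∃ x', r x' x ∧ f x' = y)

/-- Bisimilarity for a well-founded graph, defined by well-founded recursion. -/
def Bisim {α : Type u} (r : α → α → Prop) (hwf : WellFounded r) : α → α → Prop :=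
  hwf.fix (fun x E y =>
    (∀ x' (h : r x' x), ∃ y', r y' y ∧ E x' h y') ∧
    (∀ y', r y' y → ∃ x', ∃ h : r x' x, E x' h y'))

theorem bisim_iff {α : Type u} (r : α → α → Prop) (hwf : WellFounded r) (x y : α) :
    Bisim r hwf x y ↔
      (∀ x', r x' x → ∃ y', r y' y ∧ Bisim r hwf x' y') ∧
      (∀ y', r y' y → ∃ x', r x' x ∧ Bisim r hwf x' y') := by
  have := congrFun (WellFounded.fix_eq (C := fun _ => α → Prop) hwf (fun x E y =>
    (∀ x' (h : r x' x), ∃ y', r y' y ∧ E x' h y') ∧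
    (∀ y', r y' y → ∃ x', ∃ h : r x' x, E x' h y')) x) y
  rw [Bisim, this]
  constructor
  · rintro ⟨h1, h2⟩
    exact ⟨fun x' h => h1 x' h, fun y' hy => by
      obtain ⟨x', h, hb⟩ := h2 y' hy; exact ⟨x', h, hb⟩⟩
  · rintro ⟨h1, h2⟩
    exact ⟨fun x' h => h1 x' h, fun y' hy => by
      obtain ⟨x', h, hb⟩ := h2 y' hy; exact ⟨x', h, hb⟩⟩

theorem bisim_refl {α : Type u} {r : α → α → Prop} (hwf : WellFounded r) (x : α) :
    Bisim r hwf x x := by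
  induction x using hwf.induction with
  | _ x ih =>
    rw [bisim_iff]
    exact ⟨fun x' h => ⟨x', h, ih x' h⟩, fun x' h => ⟨x', h, ih x' h⟩⟩

theorem bisim_symm {α : Type u} {r : α → α → Prop} (hwf : WellFounded r) :
    ∀ {x y : α}, Bisim r hwf x y → Bisim r hwf y x := by
  intro x
  induction x using hwf.induction with
  | _ x ih =>
    intro y h
    rw [bisim_iff] at h ⊢
    obtain ⟨h1, h2⟩ := h
    constructor
    · intro y' hy
      obtain ⟨x', hx, hb⟩ := h2 y' hy
      exact ⟨x', hx, ih x' hx hb⟩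
    · intro x' hx
      obtain ⟨y', hy, hb⟩ := h1 x' hx
      exact ⟨y', hy, ih x' hx hb⟩

theorem bisim_trans {α : Type u} {r : α → α → Prop} (hwf : WellFounded r) :
    ∀ {x y z : α}, Bisim r hwf x y → Bisim r hwf y z → Bisim r hwf x z := by
  intro x
  induction x using hwf.induction with
  | _ x ih =>
    intro y z h h'
    rw [bisim_iff] at h h' ⊢
    obtain ⟨h1, h2⟩ := h
    obtain ⟨g1, g2⟩ := h'
    constructor
    · intro x' hx
      obtain ⟨y', hy, hb⟩ := h1 x' hx
      obtain ⟨z', hz, hb'⟩ := g1 y' hy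
      exact ⟨z', hz, ih x' hx hb hb'⟩
    · intro z' hz
      obtain ⟨y', hy, hb'⟩ := g2 z' hz
      obtain ⟨x', hx, hb⟩ := h2 y' hy
      exact ⟨x', hx, ih x' hx hb hb'⟩

/-- Every well-founded graph admits a surjective simulation onto a
well-founded extensional graph (its extensional quotient). -/
theorem exists_extensional_quotient {α : Type u} (r : α → α → Prop)
    (hwf : WellFounded r) :
    ∃ (β : Type u) (s : β → β → Prop),
      WellFounded s ∧
      (∀ x y : β, (∀ z, s z x ↔ s z y) → x = y) ∧
      ∃ f : α → β, Function.Surjective f ∧ IsSimulation r s f := by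
  letI st : Setoid α := ⟨Bisim r hwf, ⟨bisim_refl hwf, bisim_symm hwf, bisim_trans hwf⟩⟩
  refine ⟨Quotient st, fun u v => ∃ a b, r a b ∧ Quotient.mk st a = u ∧ Quotient.mk st b = v,
    ?_, ?_, Quotient.mk st, fun u => ⟨u.out, Quotient.out_eq u⟩, ?_, ?_⟩
  · -- well-founded
    refine ⟨fun u => ?_⟩
    obtain ⟨x, rfl⟩ : ∃ x, Quotient.mk st x = u := ⟨u.out, Quotient.out_eq u⟩
    induction x using hwf.induction with
    | _ x ih =>
      refine ⟨_, fun y ⟨a, b, hab, ha, hb⟩ => ?_⟩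
      have hbx : Bisim r hwf b x := Quotient.exact hb
      rw [bisim_iff] at hbx
      obtain ⟨x', hx', hb'⟩ := hbx.1 a hab
      have : Quotient.mk st x' = y := ha ▸ (Quotient.sound (bisim_symm hwf hb'))
      exact this ▸ ih x' hx'
  · -- extensional
    rintro u v h
    obtain ⟨x, rfl⟩ : ∃ x, Quotient.mk st x = u := ⟨u.out, Quotient.out_eq u⟩
    obtain ⟨y, rfl⟩ : ∃ y, Quotient.mk st y = v := ⟨v.out, Quotient.out_eq v⟩
    refine Quotient.sound ((bisim_iff r hwf x y).mpr ⟨fun x' hx => ?_, fun y' hy => ?_⟩)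
    · obtain ⟨a, b, hab, ha, hb⟩ :=
        (h (Quotient.mk st x')).mp ⟨x', x, hx, rfl, rfl⟩
      have hby : Bisim r hwf b y := Quotient.exact hb
      rw [bisim_iff] at hby
      obtain ⟨y', hy', hb'⟩ := hby.1 a hab
      exact ⟨y', hy', bisim_trans hwf (Quotient.exact ha.symm) hb'⟩
    · obtain ⟨a, b, hab, ha, hb⟩ :=
        (h (Quotient.mk st y')).mpr ⟨y', y, hy, rfl, rfl⟩
      have hbx : Bisim r hwf b x := Quotient.exact hb
      rw [bisim_iff] at hbx
      obtain ⟨x', hx', hb'⟩ := hbx.1 a hab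
      exact ⟨x', hx', bisim_trans hwf (bisim_symm hwf hb') (Quotient.exact ha)⟩
  · -- simulation forward
    exact fun x' x h => ⟨x', x, h, rfl, rfl⟩
  · -- simulation back
    rintro x y ⟨a, b, hab, ha, hb⟩
    have hbx : Bisim r hwf b x := Quotient.exact hb
    rw [bisim_iff] at hbx
    obtain ⟨x', hx', hb'⟩ := hbx.1 a hab
    exact ⟨x', hx', ha ▸ Quotient.sound (bisim_symm hwf hb')⟩
end

section
/- Let C be a category with finite limits in which: every morphism f factors as f = e ≫ m with e a regular epimorphism and m a monomorphism; regular epimorphisms are stable under pullback (in any pullback square whose bottom edge is a regular epimorphism, the top edge is a regular epimorphism); every regular epimorphism with codomain the terminal object ⊤ has a section; and the terminal object is a strong generator. Then a morphism p : Y ⟶ X is a regular epimorphism if and only if every global element x : ⊤ ⟶ X lifts through p (there exists y : ⊤ ⟶ Y with y ≫ p = x). -/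
open CategoryTheory CategoryTheory.Limits

universe v u

/-!
A global element `x` of `X` lifts through `p` as soon as the pullback of `p` along `x`, a map
into `⊤`, has a section; if `p` is a regular epi, so is this pullback, and it splits.
Conversely, if every global element lifts through `p = e ≫ m`, it also lifts through the mono
`m`, which is therefore an isomorphism because `⊤` is a strong generator; so `p` is regular.
-/

namespace CategoryTheory

variable {C : Type u} [Category.{v} C]

lemma IsPullback.lift_of_section {P T Y X : C} {fst : P ⟶ T} {snd : P ⟶ Y} {x : T ⟶ X}
    {p : Y ⟶ X} (h : IsPullback fst snd x p) {s : T ⟶ P} (hs : s ≫ fst = 𝟙 T) :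
    (s ≫ snd) ≫ p = x := by
  rw [Category.assoc, ← h.w, ← Category.assoc, hs, Category.id_comp]

lemma exists_lift_of_regularEpi [HasTerminal C] [HasPullbacks C]
    (hstab : ∀ {W X Y Z : C} (fst : W ⟶ X) (snd : W ⟶ Y) (f : X ⟶ Z) (g : Y ⟶ Z),
      IsPullback fst snd f g → Nonempty (RegularEpi g) → Nonempty (RegularEpi fst))
    (hsplit : ∀ {X : C} (p : X ⟶ ⊤_ C), Nonempty (RegularEpi p) →
      ∃ s : ⊤_ C ⟶ X, s ≫ p = 𝟙 (⊤_ C))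
    {Y X : C} {p : Y ⟶ X} (hp : Nonempty (RegularEpi p)) (x : ⊤_ C ⟶ X) :
    ∃ y : ⊤_ C ⟶ Y, y ≫ p = x := by
  have hpb := IsPullback.of_hasPullback x p
  obtain ⟨s, hs⟩ := hsplit _ (hstab _ _ _ _ hpb hp)
  exact ⟨_, hpb.lift_of_section hs⟩

lemma regularEpi_of_forall_exists_lift [HasTerminal C]
    (hfact : ∀ {A B : C} (f : A ⟶ B), ∃ (I : C) (e : A ⟶ I) (m : I ⟶ B),
      Nonempty (RegularEpi e) ∧ Mono m ∧ e ≫ m = f)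
    (hsg : ∀ {A X : C} (m : A ⟶ X), Mono m →
      (∀ x : ⊤_ C ⟶ X, ∃ x' : ⊤_ C ⟶ A, x' ≫ m = x) → IsIso m)
    {Y X : C} {p : Y ⟶ X} (hlift : ∀ x : ⊤_ C ⟶ X, ∃ y : ⊤_ C ⟶ Y, y ≫ p = x) :
    Nonempty (RegularEpi p) := by
  obtain ⟨I, e, m, he, hm, rfl⟩ := hfact p
  have : IsIso m := hsg m hm fun x => by
    obtain ⟨y, hy⟩ := hlift x
    exact ⟨y ≫ e, by rw [Category.assoc, hy]⟩
  have : IsRegularEpi (e ≫ m) :=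
    MorphismProperty.RespectsIso.postcomp (MorphismProperty.regularEpi C) m e ⟨he⟩
  exact this.regularEpi

end CategoryTheory

/-- In a finitely complete category with regular epi–mono factorizations,
pullback-stable regular epis, split regular epis into the terminal object, and with
the terminal object a strong generator, a morphism is a regular epimorphism iff every
global element of its codomain lifts through it. -/
theorem regularEpi_iff_global_elements_lift {C : Type u} [Category.{v} C]
    [HasFiniteLimits C]
    (hfact : ∀ {A B : C} (f : A ⟶ B), ∃ (I : C) (e : A ⟶ I) (m : I ⟶ B),
      Nonempty (RegularEpi e) ∧ Mono m ∧ e ≫ m = f)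
    (hstab : ∀ {W X Y Z : C} (fst : W ⟶ X) (snd : W ⟶ Y) (f : X ⟶ Z) (g : Y ⟶ Z),
      IsPullback fst snd f g → Nonempty (RegularEpi g) → Nonempty (RegularEpi fst))
    (hsplit : ∀ {X : C} (p : X ⟶ ⊤_ C), Nonempty (RegularEpi p) →
      ∃ s : ⊤_ C ⟶ X, s ≫ p = 𝟙 (⊤_ C))
    (hsg : ∀ {A X : C} (m : A ⟶ X), Mono m →
      (∀ x : ⊤_ C ⟶ X, ∃ x' : ⊤_ C ⟶ A, x' ≫ m = x) → IsIso m)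
    {Y X : C} (p : Y ⟶ X) :
    Nonempty (RegularEpi p) ↔ ∀ x : ⊤_ C ⟶ X, ∃ y : ⊤_ C ⟶ Y, y ≫ p = x :=
  ⟨exists_lift_of_regularEpi hstab hsplit, regularEpi_of_forall_exists_lift hfact hsg⟩
end

section
/- Let X and Y be well-founded extensional APGs with carriers in Type u. Then X and Y are isomorphic as pointed graphs if and only if they have the same members: for every well-founded extensional APG Z with carrier in Type u, Z ⋲ X holds if and only if Z ⋲ Y holds. (This is the axiom of extensionality for the class of well-founded extensional APGs.) -/
universe u

/-- An accessible pointed graph (APG): a type with a binary relation and a root from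
which every node is reachable (backwards along `Relation.ReflTransGen`). -/
structure APG : Type (u + 1) where
  carrier : Type u
  rel : carrier → carrier → Prop
  pt : carrier
  acc : ∀ z : carrier, Relation.ReflTransGen rel z pt

/-- An APG is well-founded if its relation is. -/
def APG.WF (X : APG.{u}) : Prop := WellFounded X.rel

/-- An APG is extensional if its relation is. -/
def APG.Ext (X : APG.{u}) : Prop :=
  ∀ x y : X.carrier, (∀ z, X.rel z x ↔ X.rel z y) → x = y

/-- Isomorphism of APGs: a relation isomorphism preserving the root. -/
def APG.Iso (X Y : APG.{u}) : Prop :=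
  ∃ e : X.rel ≃r Y.rel, e X.pt = Y.pt

private theorem APG.slice_acc {α : Type u} (r : α → α → Prop) (y : α)
    (z : {w : α // Relation.ReflTransGen r w y}) :
    Relation.ReflTransGen (fun a b : {w : α // Relation.ReflTransGen r w y} => r a.1 b.1)
      z ⟨y, Relation.ReflTransGen.refl⟩ := by
  obtain ⟨a, h⟩ := z
  induction h using Relation.ReflTransGen.head_induction_on with
  | refl => exact Relation.ReflTransGen.refl
  | head h' h ih => exact Relation.ReflTransGen.head h' ih

/-- The sub-APG of `Y` determined by a node `y`: the nodes admitting a path to `y`,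
rooted at `y`. -/
def APG.slice (Y : APG.{u}) (y : Y.carrier) : APG.{u} where
  carrier := {z : Y.carrier // Relation.ReflTransGen Y.rel z y}
  rel a b := Y.rel a.1 b.1
  pt := ⟨y, Relation.ReflTransGen.refl⟩
  acc z := APG.slice_acc Y.rel y z

/-- Membership of APGs: `X ⋲ Y` iff `X` is isomorphic to `Y.slice y` for some member
(child of the root) `y` of `Y`. -/
def APG.Mem (X Y : APG.{u}) : Prop :=
  ∃ y : Y.carrier, Y.rel y Y.pt ∧ APG.Iso X (Y.slice y)

/-! A well-founded relation `r` has a Mostowski collapse `c` into `ZFSet`, defined by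
`c x = {c w | r w x}`. It is invariant under initial segments (in particular isomorphisms and
the inclusion of a slice), and when `r` is extensional it is injective, so that `r` is isomorphic
to `∈` on its range. For an APG that range is the set of hereditary members of the collapse of
the root, so a well-founded extensional APG is determined up to isomorphism by the collapse of its
root; the members of an APG collapse exactly to the elements of that set, and extensionality of
APGs becomes extensionality of `ZFSet`. -/

open Relation
open scoped InitialSeg

def Relation.Extensional {α : Type*} (r : α → α → Prop) : Prop :=
  ∀ x y : α, (∀ z, r z x ↔ r z y) → x = y

namespace InitialSeg

variable {α β : Type*} {r : α → α → Prop} {s : β → β → Prop}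

theorem extensional (f : r ≼i s) (hs : Extensional s) : Extensional r := by
  refine fun a b hab => f.injective (hs _ _ fun c => ?_)
  constructor
  · intro hc
    obtain ⟨a', rfl, ha'⟩ := f.exists_eq_iff_rel.1 hc
    exact f.map_rel_iff.2 ((hab a').1 ha')
  · intro hc
    obtain ⟨b', rfl, hb'⟩ := f.exists_eq_iff_rel.1 hc
    exact f.map_rel_iff.2 ((hab b').2 hb')

theorem range_eq_of_forall_reflTransGen (f : r ≼i s) {pt : α}
    (hpt : ∀ a, ReflTransGen r a pt) : Set.range f = {b | ReflTransGen s b (f pt)} := by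
  ext b
  constructor
  · rintro ⟨a, rfl⟩
    exact (hpt a).lift f fun _ _ => f.map_rel_iff.2
  · intro hb
    induction hb using ReflTransGen.head_induction_on with
    | refl => exact ⟨pt, rfl⟩
    | head hbc _ ih =>
      obtain ⟨c, rfl⟩ := ih
      exact f.mem_range_of_rel hbc

end InitialSeg

theorem RelEmbedding.exists_relIso_of_range_eq {α β γ : Type*} {r : α → α → Prop}
    {s : β → β → Prop} {t : γ → γ → Prop} (f : r ↪r t) (g : s ↪r t)
    (h : Set.range f = Set.range g) : ∃ e : r ≃r s, ∀ a, g (e a) = f a := by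
  let e : α ≃ β := (Equiv.ofInjective f f.injective).trans
    ((Equiv.setCongr h).trans (Equiv.ofInjective g g.injective).symm)
  have hge : ∀ a, g (e a) = f a := fun a => Equiv.apply_ofInjective_symm g.injective _
  refine ⟨⟨e, fun {a b} => ?_⟩, hge⟩
  rw [← g.map_rel_iff, ← f.map_rel_iff, hge, hge]

namespace WellFounded

variable {α β : Type u} {r : α → α → Prop} {s : β → β → Prop}

noncomputable def collapse (hr : WellFounded r) : α → ZFSet.{u} :=
  hr.fix fun x IH => ZFSet.range fun w : {w // r w x} => IH w.1 w.2

theorem collapse_eq (hr : WellFounded r) (x : α) :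
    hr.collapse x = ZFSet.range fun w : {w // r w x} => hr.collapse w.1 :=
  hr.fix_eq _ x

theorem mem_collapse (hr : WellFounded r) {x : α} {z : ZFSet.{u}} :
    z ∈ hr.collapse x ↔ ∃ w, r w x ∧ hr.collapse w = z := by
  rw [collapse_eq, ZFSet.mem_range]
  exact ⟨fun ⟨w, h⟩ => ⟨w.1, w.2, h⟩, fun ⟨w, hw, h⟩ => ⟨⟨w, hw⟩, h⟩⟩

theorem collapse_mem_collapse (hr : WellFounded r) {w x : α} (h : r w x) :
    hr.collapse w ∈ hr.collapse x :=
  hr.mem_collapse.2 ⟨w, h, rfl⟩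

theorem collapse_initialSeg (hr : WellFounded r) (hs : WellFounded s) (f : r ≼i s) (a : α) :
    hs.collapse (f a) = hr.collapse a := by
  induction a using hr.induction with
  | _ a IH =>
    ext z
    simp only [mem_collapse, f.exists_eq_iff_rel]
    constructor
    · rintro ⟨_, ⟨a', rfl, ha'⟩, rfl⟩
      exact ⟨a', ha', (IH a' ha').symm⟩
    · rintro ⟨a', ha', rfl⟩
      exact ⟨f a', ⟨a', rfl, ha'⟩, IH a' ha'⟩

theorem collapse_injective (hr : WellFounded r) (he : Extensional r) :
    Function.Injective hr.collapse := by
  intro x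
  induction x using hr.induction with
  | _ x IH =>
    refine fun y hxy => he x y fun z => ⟨fun hz => ?_, fun hz => ?_⟩
    · obtain ⟨w, hwy, hwz⟩ := hr.mem_collapse.1 (hxy ▸ hr.collapse_mem_collapse hz)
      exact IH z hz hwz.symm ▸ hwy
    · obtain ⟨w, hwx, hwz⟩ := hr.mem_collapse.1 (hxy ▸ hr.collapse_mem_collapse hz)
      exact IH w hwx hwz ▸ hwx

noncomputable def collapseInitialSeg (hr : WellFounded r) (he : Extensional r) :
    r ≼i ((· ∈ ·) : ZFSet.{u} → ZFSet.{u} → Prop) where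
  toFun := hr.collapse
  inj' := hr.collapse_injective he
  map_rel_iff' := by
    refine ⟨fun h => ?_, hr.collapse_mem_collapse⟩
    obtain ⟨w, hwb, hwa⟩ := hr.mem_collapse.1 h
    exact hr.collapse_injective he hwa ▸ hwb
  mem_range_of_rel' _ _ h := by
    obtain ⟨w, -, rfl⟩ := hr.mem_collapse.1 h
    exact ⟨w, rfl⟩

end WellFounded

namespace APG

open WellFounded

def sliceInitialSeg (Y : APG.{u}) (y : Y.carrier) : (Y.slice y).rel ≼i Y.rel where
  toFun := Subtype.val
  inj' := Subtype.val_injective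
  map_rel_iff' := Iff.rfl
  mem_range_of_rel' a b h := ⟨⟨b, ReflTransGen.head h a.2⟩, rfl⟩

theorem WF.slice {Y : APG.{u}} (hY : Y.WF) (y : Y.carrier) : (Y.slice y).WF :=
  (Y.sliceInitialSeg y).toRelEmbedding.wellFounded hY

theorem Ext.slice {Y : APG.{u}} (hY : Y.Ext) (y : Y.carrier) : (Y.slice y).Ext :=
  (Y.sliceInitialSeg y).extensional hY

theorem collapse_slice_pt {Y : APG.{u}} (hY : Y.WF) (y : Y.carrier) :
    collapse (hY.slice y) (Y.slice y).pt = collapse hY y :=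
  (collapse_initialSeg (hY.slice y) hY (Y.sliceInitialSeg y) _).symm

theorem iso_iff_collapse_eq {X Y : APG.{u}} (hXw : X.WF) (hXe : X.Ext) (hYw : Y.WF)
    (hYe : Y.Ext) : X.Iso Y ↔ collapse hXw X.pt = collapse hYw Y.pt := by
  constructor
  · rintro ⟨e, he⟩
    rw [← he]
    exact (collapse_initialSeg hXw hYw e.toInitialSeg X.pt).symm
  · intro h
    let f := collapseInitialSeg hXw hXe
    let g := collapseInitialSeg hYw hYe
    have hrange : Set.range f = Set.range g := by
      rw [f.range_eq_of_forall_reflTransGen X.acc, g.range_eq_of_forall_reflTransGen Y.acc]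
      exact congrArg (fun c => {b | ReflTransGen (· ∈ ·) b c}) h
    obtain ⟨e, he⟩ := f.toRelEmbedding.exists_relIso_of_range_eq g.toRelEmbedding hrange
    exact ⟨e, collapse_injective hYw hYe ((he X.pt).trans h)⟩

theorem Mem.collapse_mem {Z X : APG.{u}} (h : Z.Mem X) (hZ : Z.WF) (hX : X.WF) :
    collapse hZ Z.pt ∈ collapse hX X.pt := by
  obtain ⟨x, hx, e, he⟩ := h
  rw [← collapse_initialSeg hZ (hX.slice x) e.toInitialSeg, RelIso.toInitialSeg_toFun, he,
    collapse_slice_pt hX x]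
  exact collapse_mem_collapse hX hx

theorem mem_iff_collapse_mem {Z X : APG.{u}} (hZw : Z.WF) (hZe : Z.Ext) (hXw : X.WF)
    (hXe : X.Ext) : Z.Mem X ↔ collapse hZw Z.pt ∈ collapse hXw X.pt := by
  refine ⟨fun h => h.collapse_mem hZw hXw, fun h => ?_⟩
  obtain ⟨x, hx, hxZ⟩ := (mem_collapse hXw).1 h
  refine ⟨x, hx, (iso_iff_collapse_eq hZw hZe (hXw.slice x) (hXe.slice x)).2 ?_⟩
  rw [collapse_slice_pt hXw x, hxZ]

theorem mem_collapse_pt_iff {X : APG.{u}} (hXw : X.WF) (hXe : X.Ext) {z : ZFSet.{u}} :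
    z ∈ collapse hXw X.pt ↔
      ∃ (Z : APG.{u}) (hZ : Z.WF), Z.Ext ∧ Z.Mem X ∧ collapse hZ Z.pt = z := by
  constructor
  · intro h
    obtain ⟨x, hx, rfl⟩ := (mem_collapse hXw).1 h
    exact ⟨X.slice x, hXw.slice x, hXe.slice x, ⟨x, hx, RelIso.refl _, rfl⟩,
      collapse_slice_pt hXw x⟩
  · rintro ⟨Z, hZw, -, hZX, rfl⟩
    exact hZX.collapse_mem hZw hXw

end APG

/-- Extensionality for well-founded extensional APGs: two such APGs are
isomorphic iff they have the same members. -/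
theorem apg_extensionality (X Y : APG.{u}) (hXw : X.WF) (hXe : X.Ext)
    (hYw : Y.WF) (hYe : Y.Ext) :
    APG.Iso X Y ↔ ∀ Z : APG.{u}, Z.WF → Z.Ext → (APG.Mem Z X ↔ APG.Mem Z Y) := by
  rw [APG.iso_iff_collapse_eq hXw hXe hYw hYe]
  constructor
  · intro h Z hZw hZe
    rw [APG.mem_iff_collapse_mem hZw hZe hXw hXe, APG.mem_iff_collapse_mem hZw hZe hYw hYe, h]
  · intro hmem
    ext z
    rw [APG.mem_collapse_pt_iff hXw hXe, APG.mem_collapse_pt_iff hYw hYe]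
    exact exists_congr fun Z => exists_congr fun hZw => and_congr_right fun hZe =>
      and_congr_left fun _ => hmem Z hZw hZe
end

section
/- For any well-founded extensional APG X = (α, r, pt) with α : Type u, there exists a well-founded extensional APG T with carrier in Type u such that: (i) for every well-founded extensional APG W with carrier in Type u, W ⋲ T holds if and only if there exists x : α with Relation.TransGen r x pt and an isomorphism of APGs between W and X/x (the APG on {z : α // Relation.ReflTransGen r z x} with the induced relation and root x); and (ii) T is transitive: whenever W ⋲ T and V ⋲ W for well-founded extensional APGs V, W with carriers in Type u, then V ⋲ T. (The class of well-founded extensional APGs has transitive closures.) -/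
universe u

namespace APGAux

open Relation

variable {X Y Z : APG.{u}}

theorem iso_symm (h : APG.Iso X Y) : APG.Iso Y X := by
  obtain ⟨e, he⟩ := h
  exact ⟨e.symm, by rw [← he, e.symm_apply_apply]⟩

theorem iso_trans (h1 : APG.Iso X Y) (h2 : APG.Iso Y Z) : APG.Iso X Z := by
  obtain ⟨e, he⟩ := h1; obtain ⟨f, hf⟩ := h2
  exact ⟨e.trans f, by show f (e X.pt) = Z.pt; rw [he, hf]⟩

theorem rtg_map (e : X.rel ≃r Y.rel) {a b : X.carrier}
    (h : ReflTransGen X.rel a b) : ReflTransGen Y.rel (e a) (e b) :=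
  h.lift e (fun _ _ hr => e.map_rel_iff.mpr hr)

/-- An isomorphism of relations transports slices. -/
theorem iso_slice (e : X.rel ≃r Y.rel) (x : X.carrier) :
    APG.Iso (X.slice x) (Y.slice (e x)) := by
  refine ⟨⟨Equiv.subtypeEquiv e.toEquiv fun z => ⟨fun h => rtg_map e h, fun h => ?_⟩,
      fun {a b} => e.map_rel_iff⟩, Subtype.ext rfl⟩
  have := rtg_map e.symm h
  simpa using this

theorem slice_val_rtg {y : Y.carrier} {a b : (Y.slice y).carrier}
    (h : ReflTransGen (Y.slice y).rel a b) : ReflTransGen Y.rel a.1 b.1 :=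
  h.lift Subtype.val fun _ _ hr => hr

theorem slice_rtg_of {y : Y.carrier} (b : (Y.slice y).carrier) :
    ∀ c (h : ReflTransGen Y.rel c b.1),
      ReflTransGen (Y.slice y).rel ⟨c, h.trans b.2⟩ b := by
  intro c h
  induction h using Relation.ReflTransGen.head_induction_on with
  | refl =>
    have : (⟨b.1, ReflTransGen.refl.trans b.2⟩ : (Y.slice y).carrier) = b := Subtype.ext rfl
    rw [this]
  | @head c d h' hd ih =>
    exact ReflTransGen.head
      (show (Y.slice y).rel ⟨c, (ReflTransGen.head h' hd).trans b.2⟩ ⟨d, hd.trans b.2⟩ from h') ih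

/-- A slice of a slice is a slice. -/
theorem slice_slice (y : Y.carrier) (z : (Y.slice y).carrier) :
    APG.Iso ((Y.slice y).slice z) (Y.slice z.1) := by
  refine ⟨⟨Equiv.ofBijective (fun w => ⟨w.1.1, slice_val_rtg w.2⟩) ⟨?_, ?_⟩, ?_⟩, rfl⟩
  · intro a b hab
    apply Subtype.ext; apply Subtype.ext
    have h1 := congrArg Subtype.val hab
    exact h1
  · rintro ⟨v, hv⟩
    exact ⟨⟨⟨v, hv.trans z.2⟩, slice_rtg_of z v hv⟩, rfl⟩
  · exact Iff.rfl

/-- Carrier of the transitive closure. -/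
private abbrev S (X : APG.{u}) : Type u := {x : X.carrier // Relation.TransGen X.rel x X.pt}

/-- Relation of the transitive closure. -/
private def Trel (X : APG.{u}) : Option (S X) → Option (S X) → Prop
  | some a, some b => X.rel a.1 b.1
  | some _, none => True
  | none, _ => False

/-- The transitive-closure APG. -/
private def Tapg (X : APG.{u}) : APG.{u} where
  carrier := Option (S X)
  rel := Trel X
  pt := none
  acc z := by
    cases z with
    | none => exact ReflTransGen.refl
    | some a => exact ReflTransGen.single trivial

theorem trel_rtg {z : Option (S X)} {a : S X}
    (h : ReflTransGen (Trel X) z (some a)) :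
    ∃ b : S X, z = some b ∧ ReflTransGen X.rel b.1 a.1 := by
  induction h using Relation.ReflTransGen.head_induction_on with
  | refl => exact ⟨a, rfl, ReflTransGen.refl⟩
  | @head c d h' hd ih =>
    obtain ⟨b, rfl, hb⟩ := ih
    cases c with
    | none => exact absurd h' id
    | some c' => exact ⟨c', rfl, ReflTransGen.head h' hb⟩

theorem to_trel_rtg {a : S X} :
    ∀ (w : X.carrier), ReflTransGen X.rel w a.1 → ∀ hw : Relation.TransGen X.rel w X.pt,
      ReflTransGen (Trel X) (some ⟨w, hw⟩) (some a) := by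
  intro w h
  induction h using Relation.ReflTransGen.head_induction_on with
  | refl =>
    intro hw
    have : (⟨a.1, hw⟩ : S X) = a := Subtype.ext rfl
    rw [this]
  | @head c d h' hd ih =>
    intro hw
    exact ReflTransGen.head
      (show Trel X (some ⟨c, hw⟩) (some ⟨d, Relation.TransGen.trans_right hd a.2⟩) from h')
      (ih (Relation.TransGen.trans_right hd a.2))

/-- The slice of the closure at `some a` is the slice of `X` at `a`. -/
theorem slice_Tapg (a : S X) : APG.Iso (X.slice a.1) ((Tapg X).slice (some a)) := by
  refine ⟨⟨Equiv.ofBijective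
      (fun w => ⟨some ⟨w.1, Relation.TransGen.trans_right w.2 a.2⟩, to_trel_rtg w.1 w.2 _⟩) ⟨?_, ?_⟩, ?_⟩, ?_⟩
  · intro u v huv
    have h1 := congrArg Subtype.val huv
    injection h1 with h2
    have h3 := congrArg Subtype.val h2
    exact Subtype.ext h3
  · rintro ⟨z, hz⟩
    obtain ⟨b, rfl, hb⟩ := trel_rtg hz
    exact ⟨⟨b.1, hb⟩, Subtype.ext (congrArg some (Subtype.ext rfl))⟩
  · exact Iff.rfl
  · exact Subtype.ext (congrArg some (Subtype.ext rfl))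

theorem Tapg_wf (hXw : X.WF) : (Tapg X).WF := by
  have acc_some : ∀ v : X.carrier, ∀ h : Relation.TransGen X.rel v X.pt,
      Acc (Trel X) (some ⟨v, h⟩) := by
    intro v
    induction v using WellFounded.induction hXw with
    | _ v ih =>
      intro h
      refine Acc.intro _ fun w hw => ?_
      cases w with
      | none => exact absurd hw id
      | some b => exact ih b.1 hw b.2
  refine WellFounded.intro fun z => ?_
  cases z with
  | none =>
    refine Acc.intro _ fun w hw => ?_
    cases w with
    | none => exact absurd hw id
    | some b => exact acc_some b.1 b.2
  | some b => exact acc_some b.1 b.2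

theorem Tapg_ext (hXw : X.WF) (hXe : X.Ext) : (Tapg X).Ext := by
  intro x y hxy
  cases x with
  | none =>
    cases y with
    | none => rfl
    | some b =>
      exfalso
      have : X.rel b.1 b.1 := (hxy (some b)).mp trivial
      exact hXw.asymmetric _ _ this this
  | some a =>
    cases y with
    | none =>
      exfalso
      have : X.rel a.1 a.1 := (hxy (some a)).mpr trivial
      exact hXw.asymmetric _ _ this this
    | some b =>
      have key : ∀ z : X.carrier, X.rel z a.1 ↔ X.rel z b.1 := by
        intro z
        constructor
        · intro hz
          exact (hxy (some ⟨z, Relation.TransGen.head hz a.2⟩)).mp hz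
        · intro hz
          exact (hxy (some ⟨z, Relation.TransGen.head hz b.2⟩)).mpr hz
      exact congrArg some (Subtype.ext (hXe a.1 b.1 key))

end APGAux

/-- Transitive closures for well-founded extensional APGs: the members
of `T` are exactly the slices of `X` at nodes strictly below the root, and `T` is
transitive. -/
theorem apg_transitive_closure (X : APG.{u}) (hXw : X.WF) (hXe : X.Ext) :
    ∃ T : APG.{u}, T.WF ∧ T.Ext ∧
      (∀ W : APG.{u}, W.WF → W.Ext →
        (APG.Mem W T ↔
          ∃ x : X.carrier, Relation.TransGen X.rel x X.pt ∧ APG.Iso W (X.slice x))) ∧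
      (∀ W V : APG.{u}, W.WF → W.Ext → V.WF → V.Ext →
        APG.Mem W T → APG.Mem V W → APG.Mem V T) := by

  classical
  refine ⟨APGAux.Tapg X, APGAux.Tapg_wf hXw, APGAux.Tapg_ext hXw hXe, ?_, ?_⟩
  · intro W _ _
    constructor
    · rintro ⟨y, hy, hiso⟩
      cases y with
      | none => exact absurd hy id
      | some a =>
        exact ⟨a.1, a.2, APGAux.iso_trans hiso (APGAux.iso_symm (APGAux.slice_Tapg a))⟩
    · rintro ⟨x, hx, hiso⟩
      exact ⟨some ⟨x, hx⟩, trivial, APGAux.iso_trans hiso (APGAux.slice_Tapg ⟨x, hx⟩)⟩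
  · intro W V _ _ _ _ hWT hVW
    obtain ⟨y, hy, hiso⟩ := hWT
    cases y with
    | none => exact absurd hy id
    | some a =>
      -- W ≅ X.slice a.1
      have hWX : APG.Iso W (X.slice a.1) :=
        APGAux.iso_trans hiso (APGAux.iso_symm (APGAux.slice_Tapg a))
      obtain ⟨e, he⟩ := hWX
      obtain ⟨w, hw, hVw⟩ := hVW
      -- e w is a member of X.slice a.1
      have hmem : (X.slice a.1).rel (e w) (X.slice a.1).pt := by
        rw [← he]; exact e.map_rel_iff.mpr hw
      have hrel : X.rel (e w).1 a.1 := hmem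
      have htg : Relation.TransGen X.rel (e w).1 X.pt := Relation.TransGen.head hrel a.2
      have hV : APG.Iso V (X.slice (e w).1) :=
        APGAux.iso_trans (APGAux.iso_trans hVw (APGAux.iso_slice e w))
          (APGAux.slice_slice a.1 (e w))
      exact ⟨some ⟨(e w).1, htg⟩, trivial,
        APGAux.iso_trans hV (APGAux.slice_Tapg ⟨(e w).1, htg⟩)⟩
end
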